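/- arXiv:2506.17002 — 6 statements merged into one kernel-verified Lean document; each statement's English description precedes it below -/
import Mathlib

section
/- Let k > 0 and let X, Y : ℝ → ℝ be continuous functions such that X is odd, Y is even, and for all x one has X(x + 2π) = X(x) + 2π/k and Y(x + 2π) = Y(x). If the curve x ↦ (X(x), Y(x)) self-intersects, i.e., there exist real numbers a ≠ b with X(a) = X(b) and Y(a) = Y(b), then there exist α, β ∈ [0, 4π] with α ≠ β such that X(α) = X(β) and Y(α) = Y(β). -/
open Real Function Set AddConstMapClass

open scoped AddConstMap

/-! If the window `[0, 4π]` holds no self-intersection, then `X` has no zero on `(0, 2π]`, since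
a zero `t` would make `2π - t, 2π + t` one (`Y` is even and `2π`-periodic). By the intermediate
value theorem and `X (x + 2π) = X x + 2π/k`, `X` is then positive on `(0, ∞)`, and negative on
`(-∞, 0)` by oddness. Translate a self-intersection `a < b` by a multiple of `2π` so that
`a ∈ [0, 2π)`: then `b ≤ 4π`, for otherwise `X a ≤ 2π/k < X b`. -/

section

variable {p d : ℝ}

theorem Function.Periodic.apply_sub_eq_apply_add {Y : ℝ → ℝ} (hper : Periodic Y p)
    (heven : Y.Even) (t : ℝ) : Y (p - t) = Y (p + t) := by
  rw [hper.sub_eq', heven, add_comm, hper]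

namespace AddConstMap

theorem map_const_sub_of_odd (f : ℝ →+c[p, d] ℝ) (hodd : (⇑f).Odd) (t : ℝ) :
    f (p - t) = d - f t := by
  rw [sub_eq_neg_add, map_add_const, hodd]
  ring

theorem pos_of_forall_ne_zero (f : ℝ →+c[p, d] ℝ) (hf : Continuous f) (hp : 0 < p)
    (hd : 0 < d) (h0 : f 0 = 0) (hne : ∀ t ∈ Ioc 0 p, f t ≠ 0) : ∀ t, 0 < t → 0 < f t := by
  have hfp : f p = d := by rw [AddConstMapClass.map_const, h0, zero_add]
  have hpos_Ioc : ∀ s ∈ Ioc 0 p, 0 < f s := by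
    intro s hs
    by_contra! hneg
    obtain ⟨r, hr, hr0⟩ :=
      intermediate_value_Icc hs.2 hf.continuousOn ⟨hneg, hfp.symm ▸ hd.le⟩
    exact hne r ⟨hs.1.trans_le hr.1, hr.2⟩ hr0
  intro t ht
  have hmod : toIocMod hp 0 t ∈ Ioc 0 p := by simpa using toIocMod_mem_Ioc hp 0 t
  have hdiv : 0 ≤ toIocDiv hp 0 t := by
    by_contra! hneg
    have : toIocDiv hp 0 t • p ≤ -p := by
      simpa using zsmul_le_zsmul_left hp.le (Int.le_sub_one_of_lt hneg)
    linarith [toIocMod_add_toIocDiv_zsmul hp 0 t, hmod.2]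
  calc 0 < f (toIocMod hp 0 t) := hpos_Ioc _ hmod
    _ ≤ f (toIocMod hp 0 t) + toIocDiv hp 0 t • d :=
      le_add_of_nonneg_right (zsmul_nonneg hd.le hdiv)
    _ = f t := by rw [← map_add_zsmul, toIocMod_add_toIocDiv_zsmul]

theorem map_lt_map_of_le_of_lt (f : ℝ →+c[p, d] ℝ) (hodd : (⇑f).Odd)
    (hpos : ∀ t, 0 < t → 0 < f t) {u v : ℝ} (hu : u ≤ p) (hv : p < v) : f u < f v := by
  have hnonpos : f (u - p) ≤ 0 := by
    rcases (sub_nonpos.2 hu).lt_or_eq with hlt | heq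
    · rw [← neg_sub, hodd.eq]
      linarith [hpos (p - u) (by linarith)]
    · rw [heq, hodd.map_zero]
  calc f u = f (u - p) + d := by rw [map_sub_const, sub_add_cancel]
    _ < f (v - p) + d := by linarith [hpos _ (sub_pos.2 hv)]
    _ = f v := by rw [map_sub_const, sub_add_cancel]

end AddConstMap

end

theorem self_intersection_in_window_general
    (k : ℝ) (hk : 0 < k) (X Y : ℝ → ℝ)
    (hXcont : Continuous X)
    (hXodd : ∀ x, X (-x) = -X x) (hYeven : ∀ x, Y (-x) = Y x)
    (hXper : ∀ x, X (x + 2 * π) = X x + 2 * π / k)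
    (hYper : ∀ x, Y (x + 2 * π) = Y x)
    (a b : ℝ) (hab : a ≠ b) (hXab : X a = X b) (hYab : Y a = Y b) :
    ∃ α β : ℝ, α ∈ Set.Icc (0 : ℝ) (4 * π) ∧ β ∈ Set.Icc (0 : ℝ) (4 * π) ∧
      α ≠ β ∧ X α = X β ∧ Y α = Y β := by
  by_contra! hwin
  let F : ℝ →+c[2 * π, 2 * π / k] ℝ := ⟨X, hXper⟩
  have hYper' : Periodic Y (2 * π) := hYper
  have hX0 : X 0 = 0 := Odd.map_zero hXodd
  have hne : ∀ t ∈ Ioc 0 (2 * π), X t ≠ 0 := by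
    rintro t ⟨ht0, ht⟩ h0
    refine hwin (2 * π - t) (2 * π + t) ⟨by linarith, by linarith [pi_pos]⟩
      ⟨by linarith, by linarith⟩ (by linarith) ?_ (hYper'.apply_sub_eq_apply_add hYeven t)
    change F (2 * π - t) = F (2 * π + t)
    rw [F.map_const_sub_of_odd hXodd, add_comm, map_add_const]
    rw [show F t = 0 from h0]
    ring
  have hpos := F.pos_of_forall_ne_zero hXcont two_pi_pos (by positivity) hX0 hne
  wlog hlt : a < b generalizing a b
  · exact this b a hab.symm hXab.symm hYab.symm (lt_of_le_of_ne (not_lt.1 hlt) hab.symm)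
  set n := toIcoDiv two_pi_pos 0 a
  have ha : a - n • (2 * π) ∈ Ico 0 (2 * π) := by
    rw [self_sub_toIcoDiv_zsmul]
    exact toIcoMod_mem_Ico' two_pi_pos a
  have hX : X (a - n • (2 * π)) = X (b - n • (2 * π)) := by
    change F _ = F _
    rw [map_sub_zsmul, map_sub_zsmul]
    exact congrArg (· - _) hXab
  have hY : Y (a - n • (2 * π)) = Y (b - n • (2 * π)) := by
    rw [hYper'.sub_zsmul_eq, hYper'.sub_zsmul_eq, hYab]
  by_cases hb : b - n • (2 * π) ≤ 4 * π
  · exact hwin _ _ ⟨ha.1, by linarith [ha.2]⟩ ⟨by linarith [ha.1], hb⟩ (by linarith) hX hY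
  · have hb' : 2 * π < b - n • (2 * π) := by linarith [not_le.1 hb, pi_pos]
    exact (F.map_lt_map_of_le_of_lt hXodd hpos ha.2.le hb').ne hX

/-- Any self-intersection of the periodic symmetric interface curve
`x ↦ (X x, Y x)` is witnessed by two distinct parameters in `[0, 4π]`. -/
theorem self_intersection_in_window
    (k : ℝ) (hk : 0 < k) (X Y : ℝ → ℝ)
    (hXcont : Continuous X) (hYcont : Continuous Y)
    (hXodd : ∀ x, X (-x) = -X x) (hYeven : ∀ x, Y (-x) = Y x)
    (hXper : ∀ x, X (x + 2 * π) = X x + 2 * π / k)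
    (hYper : ∀ x, Y (x + 2 * π) = Y x)
    (a b : ℝ) (hab : a ≠ b) (hXab : X a = X b) (hYab : Y a = Y b) :
    ∃ α β : ℝ, α ∈ Set.Icc (0 : ℝ) (4 * π) ∧ β ∈ Set.Icc (0 : ℝ) (4 * π) ∧
      α ≠ β ∧ X α = X β ∧ Y α = Y β :=
  self_intersection_in_window_general k hk X Y hXcont hXodd hYeven hXper hYper a b hab hXab hYab
end

section
/- For every a > 0, the function k ↦ k·coth(a·k) is strictly increasing on (0, ∞); that is, for all 0 < k₁ < k₂ one has k₁·coth(a·k₁) < k₂·coth(a·k₂). -/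
open Real

/-- The hyperbolic cotangent `coth x = cosh x / sinh x`. -/
noncomputable def coth (x : ℝ) : ℝ := Real.cosh x / Real.sinh x

/-! The derivative of `x coth x` is `(sinh x cosh x - x) / sinh² x`, by `cosh² - sinh² = 1`, and it is
positive for `x > 0` because `sinh x cosh x = sinh (2x) / 2 > x`. The parameter `a` is removed by
`k coth (a k) = (a k) coth (a k) / a`. -/

lemma hasDerivAt_mul_coth {x : ℝ} (hx : x ≠ 0) :
    HasDerivAt (fun x => x * coth x) ((sinh x * cosh x - x) / sinh x ^ 2) x := by
  have hs : sinh x ≠ 0 := sinh_ne_zero.mpr hx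
  have h : HasDerivAt (fun y => y * (cosh y / sinh y))
      (1 * (cosh x / sinh x) + x * ((sinh x * sinh x - cosh x * cosh x) / sinh x ^ 2)) x :=
    (hasDerivAt_id' x).mul ((hasDerivAt_cosh x).div (hasDerivAt_sinh x) hs)
  refine h.congr_deriv ?_
  have hpyth := cosh_sq_sub_sinh_sq x
  field_simp
  linear_combination -x * hpyth

lemma self_lt_sinh_mul_cosh {x : ℝ} (hx : 0 < x) : x < sinh x * cosh x := by
  have h := self_lt_sinh_iff.mpr (mul_pos two_pos hx)
  rw [sinh_two_mul] at h
  linarith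

lemma continuousOn_coth : ContinuousOn coth {x | x ≠ 0} :=
  continuous_cosh.continuousOn.div continuous_sinh.continuousOn fun _ hx => sinh_ne_zero.mpr hx

lemma strictMonoOn_mul_coth : StrictMonoOn (fun x => x * coth x) (Set.Ioi 0) := by
  refine strictMonoOn_of_deriv_pos (convex_Ioi 0) ?_ fun x hx => ?_
  · exact continuousOn_id.mul (continuousOn_coth.mono fun x (hx : 0 < x) => hx.ne')
  · rw [interior_Ioi] at hx
    rw [(hasDerivAt_mul_coth hx.ne').deriv]
    have hs : 0 < sinh x := sinh_pos_iff.mpr hx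
    exact div_pos (sub_pos.mpr (self_lt_sinh_mul_cosh hx)) (by positivity)

/-- For every `a > 0`, the function `k ↦ k · coth (a·k)` is strictly increasing on `(0,∞)`. -/
theorem mul_coth_strictMono
    (a : ℝ) (ha : 0 < a) (k₁ k₂ : ℝ) (hk₁ : 0 < k₁) (hk₁₂ : k₁ < k₂) :
    k₁ * coth (a * k₁) < k₂ * coth (a * k₂) := by
  have hscaled : a * k₁ * coth (a * k₁) < a * k₂ * coth (a * k₂) :=
    strictMonoOn_mul_coth (Set.mem_Ioi.mpr (mul_pos ha hk₁))
      (Set.mem_Ioi.mpr (mul_pos ha (hk₁.trans hk₁₂))) (mul_lt_mul_of_pos_left hk₁₂ ha)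
  rw [mul_assoc, mul_assoc] at hscaled
  exact lt_of_mul_lt_mul_left hscaled ha.le
end

section
/- Let f : ℝ → ℝ be continuously differentiable on [0,π] with f(0) = f(π) = 0, f'(0) < 0, f'(π) > 0, and f(x) < 0 for all x ∈ (0,π). Then there exists ε > 0 such that every function g : ℝ → ℝ that is continuously differentiable on [0,π] and satisfies g(0) = g(π) = 0, sup_{x∈[0,π]} |f(x) − g(x)| < ε and sup_{x∈[0,π]} |f'(x) − g'(x)| < ε also satisfies g'(0) < 0, g'(π) > 0 and g(x) < 0 for all x ∈ (0,π). -/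
/-!
Since `f'` is continuous with `f'(0) < 0 < f'(π)`, there is a margin `c > 0` and points
`0 < p, q < π` with `f' ≤ -c` on `[0, p]`, `f' ≥ c` on `[q, π]`, and (by compactness)
`f ≤ -c` on `[p, q]`. A `g` that is `c`-close to `f` in `C¹` is then strictly decreasing on
`[0, p]` and strictly increasing on `[q, π]`, hence negative there because it vanishes at the
endpoints, and it is negative on `[p, q]` by closeness of the values alone.
-/

open Real Set Filter Topology

section EndpointNeighbourhoods

variable {α β : Type*} [LinearOrder α] [TopologicalSpace α] [OrderTopology α] [DenselyOrdered α]
  [LinearOrder β] [TopologicalSpace β] [OrderTopology β] {f : α → β} {a b : α} {c : β}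

theorem ContinuousWithinAt.exists_Icc_left_forall_lt [NoMaxOrder α]
    (hf : ContinuousWithinAt f (Icc a b) a) (hab : a < b) (hc : f a < c) :
    ∃ p ∈ Ioo a b, ∀ x ∈ Icc a p, f x < c := by
  have h : ∀ᶠ x in 𝓝[≥] a, f x < c ∧ x < b := by
    rw [← nhdsWithin_Icc_eq_nhdsGE hab]
    exact (hf.eventually (gt_mem_nhds hc)).and (nhdsWithin_le_nhds (gt_mem_nhds hab))
  obtain ⟨p, hap, hp⟩ := nhdsGE_basis_Icc.eventually_iff.mp h
  exact ⟨p, ⟨hap, (hp ⟨hap.le, le_rfl⟩).2⟩, fun x hx => (hp hx).1⟩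

theorem ContinuousWithinAt.exists_Icc_right_forall_gt [NoMinOrder α]
    (hf : ContinuousWithinAt f (Icc a b) b) (hab : a < b) (hc : c < f b) :
    ∃ q ∈ Ioo a b, ∀ x ∈ Icc q b, c < f x := by
  have h : ∀ᶠ x in 𝓝[≤] b, c < f x ∧ a < x := by
    rw [← nhdsWithin_Icc_eq_nhdsLE hab]
    exact (hf.eventually (lt_mem_nhds hc)).and (nhdsWithin_le_nhds (lt_mem_nhds hab))
  obtain ⟨q, hqb, hq⟩ := nhdsLE_basis_Icc.eventually_iff.mp h
  exact ⟨q, ⟨(hq ⟨le_rfl, hqb.le⟩).2, hqb⟩, fun x hx => (hq hx).1⟩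

end EndpointNeighbourhoods

theorem IsCompact.exists_pos_forall_le_neg {α : Type*} [TopologicalSpace α] {K : Set α}
    {f : α → ℝ} (hK : IsCompact K) (hf : ContinuousOn f K) (hneg : ∀ x ∈ K, f x < 0) :
    ∃ m > 0, ∀ x ∈ K, f x ≤ -m := by
  rcases K.eq_empty_or_nonempty with rfl | hne
  · exact ⟨1, one_pos, by simp⟩
  obtain ⟨x₀, hx₀, hmax⟩ := hK.exists_isMaxOn hne hf
  exact ⟨-f x₀, neg_pos.mpr (hneg x₀ hx₀), fun x hx => by simpa using hmax hx⟩

section Endpoints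

variable {g g' : ℝ → ℝ} {a b : ℝ}

theorem neg_on_Ioc_of_hasDerivAt_neg (hg : ∀ x ∈ Icc a b, HasDerivAt g (g' x) x)
    (hg' : ∀ x ∈ Ioo a b, g' x < 0) (ha : g a = 0) : ∀ x ∈ Ioc a b, g x < 0 := by
  have hanti : StrictAntiOn g (Icc a b) :=
    strictAntiOn_of_hasDerivWithinAt_neg (convex_Icc a b)
      (fun x hx => (hg x hx).continuousAt.continuousWithinAt)
      (fun x hx => (hg x (interior_subset hx)).hasDerivWithinAt)
      (fun x hx => hg' x (by rwa [interior_Icc] at hx))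
  intro x hx
  exact ha ▸ hanti ⟨le_rfl, hx.1.le.trans hx.2⟩ (Ioc_subset_Icc_self hx) hx.1

theorem neg_on_Ico_of_hasDerivAt_pos (hg : ∀ x ∈ Icc a b, HasDerivAt g (g' x) x)
    (hg' : ∀ x ∈ Ioo a b, 0 < g' x) (hb : g b = 0) : ∀ x ∈ Ico a b, g x < 0 := by
  have hmono : StrictMonoOn g (Icc a b) :=
    strictMonoOn_of_hasDerivWithinAt_pos (convex_Icc a b)
      (fun x hx => (hg x hx).continuousAt.continuousWithinAt)
      (fun x hx => (hg x (interior_subset hx)).hasDerivWithinAt)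
      (fun x hx => hg' x (by rwa [interior_Icc] at hx))
  intro x hx
  exact hb ▸ hmono (Ico_subset_Icc_self hx) ⟨hx.1.trans hx.2.le, le_rfl⟩ hx.2

end Endpoints

theorem exists_nodal_margin {f f' : ℝ → ℝ} {a b : ℝ} (hab : a < b) (hf : ContinuousOn f (Ioo a b))
    (hf'a : ContinuousWithinAt f' (Icc a b) a) (hf'b : ContinuousWithinAt f' (Icc a b) b)
    (hda : f' a < 0) (hdb : 0 < f' b) (hneg : ∀ x ∈ Ioo a b, f x < 0) :
    ∃ c > 0, ∃ p ∈ Ioo a b, ∃ q ∈ Ioo a b,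
      (∀ x ∈ Icc a p, f' x ≤ -c) ∧ (∀ x ∈ Icc q b, c ≤ f' x) ∧ ∀ x ∈ Icc p q, f x ≤ -c := by
  obtain ⟨p, hp, hfp⟩ := hf'a.exists_Icc_left_forall_lt hab (by linarith : f' a < f' a / 2)
  obtain ⟨q, hq, hfq⟩ := hf'b.exists_Icc_right_forall_gt hab (by linarith : f' b / 2 < f' b)
  have hpq : Icc p q ⊆ Ioo a b := Icc_subset_Ioo hp.1 hq.2
  obtain ⟨m, hm, hfm⟩ :=
    isCompact_Icc.exists_pos_forall_le_neg (hf.mono hpq) fun x hx => hneg x (hpq hx)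
  set c := min (min (-f' a / 2) (f' b / 2)) m
  have hca : c ≤ -f' a / 2 := (min_le_left _ _).trans (min_le_left _ _)
  have hcb : c ≤ f' b / 2 := (min_le_left _ _).trans (min_le_right _ _)
  have hcm : c ≤ m := min_le_right _ _
  refine ⟨c, lt_min (lt_min (by linarith) (by linarith)) hm, p, hp, q, hq,
    fun x hx => ?_, fun x hx => ?_, fun x hx => ?_⟩
  · linarith [hfp x hx]
  · linarith [hfq x hx]
  · linarith [hfm x hx]

theorem nodal_open_condition_general
    (f f' : ℝ → ℝ)
    (hf : ∀ x ∈ Set.Icc (0 : ℝ) π, HasDerivAt f (f' x) x)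
    (hf' : ContinuousOn f' (Set.Icc (0 : ℝ) π))
    (hd0 : f' 0 < 0) (hdπ : f' π > 0)
    (hneg : ∀ x ∈ Set.Ioo (0 : ℝ) π, f x < 0) :
    ∃ ε > 0, ∀ g g' : ℝ → ℝ,
      (∀ x ∈ Set.Icc (0 : ℝ) π, HasDerivAt g (g' x) x) →
      ContinuousOn g' (Set.Icc (0 : ℝ) π) →
      g 0 = 0 → g π = 0 →
      (∀ x ∈ Set.Icc (0 : ℝ) π, |f x - g x| < ε) →
      (∀ x ∈ Set.Icc (0 : ℝ) π, |f' x - g' x| < ε) →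
      g' 0 < 0 ∧ g' π > 0 ∧ ∀ x ∈ Set.Ioo (0 : ℝ) π, g x < 0 := by
  obtain ⟨c, hc, p, hp, q, hq, hfp, hfq, hfm⟩ := exists_nodal_margin pi_pos
    (fun x hx => (hf x (Ioo_subset_Icc_self hx)).continuousAt.continuousWithinAt)
    (hf' 0 (left_mem_Icc.mpr pi_pos.le)) (hf' π (right_mem_Icc.mpr pi_pos.le)) hd0 hdπ hneg
  have hp_sub : Icc 0 p ⊆ Icc 0 π := Icc_subset_Icc_right hp.2.le
  have hq_sub : Icc q π ⊆ Icc 0 π := Icc_subset_Icc_left hq.1.le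
  refine ⟨c, hc, fun g g' hg _ hg0 hgπ hfg hfg' => ?_⟩
  have hgp : ∀ x ∈ Icc 0 p, g' x < 0 := fun x hx => by
    linarith [hfp x hx, (abs_lt.mp (hfg' x (hp_sub hx))).1]
  have hgq : ∀ x ∈ Icc q π, 0 < g' x := fun x hx => by
    linarith [hfq x hx, (abs_lt.mp (hfg' x (hq_sub hx))).2]
  refine ⟨hgp 0 (left_mem_Icc.mpr hp.1.le), hgq π (right_mem_Icc.mpr hq.2.le), fun x hx => ?_⟩
  rcases le_or_gt x p with hxp | hpx
  · exact neg_on_Ioc_of_hasDerivAt_neg (fun y hy => hg y (hp_sub hy))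
      (fun y hy => hgp y (Ioo_subset_Icc_self hy)) hg0 x ⟨hx.1, hxp⟩
  rcases le_or_gt q x with hqx | hxq
  · exact neg_on_Ico_of_hasDerivAt_pos (fun y hy => hg y (hq_sub hy))
      (fun y hy => hgq y (Ioo_subset_Icc_self hy)) hgπ x ⟨hqx, hx.2⟩
  · linarith [hfm x ⟨hpx.le, hxq.le⟩, (abs_lt.mp (hfg x (Ioo_subset_Icc_self hx))).1]

/-- Openness of the nodal configuration: the set of `C¹` functions on `[0,π]`
vanishing at the endpoints, strictly negative inside, with `f'(0) < 0 < f'(π)`,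
is open in the `C¹` topology. -/
theorem nodal_open_condition
    (f f' : ℝ → ℝ)
    (hf : ∀ x ∈ Set.Icc (0 : ℝ) π, HasDerivAt f (f' x) x)
    (hf' : ContinuousOn f' (Set.Icc (0 : ℝ) π))
    (h0 : f 0 = 0) (hπ : f π = 0)
    (hd0 : f' 0 < 0) (hdπ : f' π > 0)
    (hneg : ∀ x ∈ Set.Ioo (0 : ℝ) π, f x < 0) :
    ∃ ε > 0, ∀ g g' : ℝ → ℝ,
      (∀ x ∈ Set.Icc (0 : ℝ) π, HasDerivAt g (g' x) x) →
      ContinuousOn g' (Set.Icc (0 : ℝ) π) →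
      g 0 = 0 → g π = 0 →
      (∀ x ∈ Set.Icc (0 : ℝ) π, |f x - g x| < ε) →
      (∀ x ∈ Set.Icc (0 : ℝ) π, |f' x - g' x| < ε) →
      g' 0 < 0 ∧ g' π > 0 ∧ ∀ x ∈ Set.Ioo (0 : ℝ) π, g x < 0 :=
  nodal_open_condition_general f f' hf hf' hd0 hdπ hneg
end

section
/- Let a₁ < b₁ and a₂ < b₂ be real numbers and let R = {z ∈ ℂ : a₁ < Re z < b₁ and a₂ < Im z < b₂} be the corresponding open rectangle. Suppose f : ℂ → ℂ is continuous on the closure of R and complex-differentiable at every point of R, and suppose f maps the topological boundary of R into the set {z ∈ ℂ : Re z = 0 or Im z = 0}. Then f is constant on the closure of R. -/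
/-!
Since `ℝ ∪ iℝ` is the preimage of `ℝ` under squaring, `f²` is real on the boundary.
The maximum modulus principle for `exp (± i f²)`, whose modulus is `exp (∓ Im f²)`, shows
that `f²` is real on the whole closed rectangle; by the open mapping theorem `f²` is then
constant. Finally, `f` is continuous on the connected closed rectangle with values in the
finite set of square roots of that constant, so `f` is constant.
-/

open Complex Set Bornology

theorem Convex.reProdIm {s t : Set ℝ} (hs : Convex ℝ s) (ht : Convex ℝ t) :
    Convex ℝ (s ×ℂ t) :=
  (hs.linear_preimage reLm).inter (ht.linear_preimage imLm)

theorem Set.finite_setOf_pow_eq {K : Type*} [CommRing K] [IsDomain K] {n : ℕ} (hn : n ≠ 0)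
    (c : K) : {x : K | x ^ n = c}.Finite := by
  classical
  convert (Polynomial.nthRoots n c).toFinset.finite_toSet using 1
  ext x
  simp [Polynomial.mem_nthRoots (Nat.pos_of_ne_zero hn)]

theorem IsPreconnected.constant_of_pow_eq {α K : Type*} [TopologicalSpace α] [CommRing K]
    [IsDomain K] [TopologicalSpace K] [T1Space K] {S : Set α} (hS : IsPreconnected S)
    {f : α → K} (hf : ContinuousOn f S) {n : ℕ} (hn : n ≠ 0) {c : K}
    (hfc : ∀ z ∈ S, f z ^ n = c) {x y : α} (hx : x ∈ S) (hy : y ∈ S) : f x = f y :=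
  hS.constant_of_mapsTo (Set.finite_setOf_pow_eq hn c).isDiscrete hf hfc hx hy

namespace Complex

theorem sq_im_eq_zero_of_re_eq_zero_or_im_eq_zero {z : ℂ} (hz : z.re = 0 ∨ z.im = 0) :
    (z ^ 2).im = 0 := by
  rcases hz with h | h <;> simp [sq, mul_im, h]

theorem re_le_of_forall_mem_frontier_re_le {U : Set ℂ} (hU : IsBounded U) {g : ℂ → ℂ}
    (hg : DiffContOnCl ℂ g U) {C : ℝ} (hC : ∀ z ∈ frontier U, (g z).re ≤ C) {z : ℂ}
    (hz : z ∈ closure U) : (g z).re ≤ C := by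
  have hexp : DiffContOnCl ℂ (fun z ↦ exp (g z)) U :=
    ⟨fun w hw ↦ (hg.differentiableOn w hw).cexp,
      continuous_exp.comp_continuousOn hg.continuousOn⟩
  have hnorm := norm_le_of_forall_mem_frontier_norm_le hU hexp (C := Real.exp C)
    (fun w hw ↦ by simpa [norm_exp] using hC w hw) hz
  simpa [norm_exp] using hnorm

theorem im_eq_zero_of_forall_mem_frontier_im_eq_zero {U : Set ℂ} (hU : IsBounded U)
    {g : ℂ → ℂ} (hg : DiffContOnCl ℂ g U) (h : ∀ z ∈ frontier U, (g z).im = 0) {z : ℂ}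
    (hz : z ∈ closure U) : (g z).im = 0 := by
  have hle := re_le_of_forall_mem_frontier_re_le hU (hg.const_smul (-I)) (C := 0)
    (fun w hw ↦ by simp [h w hw]) hz
  have hge := re_le_of_forall_mem_frontier_re_le hU (hg.const_smul I) (C := 0)
    (fun w hw ↦ by simp [h w hw]) hz
  exact le_antisymm (by simpa using hle) (by simpa using hge)

end Complex

/-- A function holomorphic on an open rectangle, continuous up to the boundary,
whose boundary values lie in `ℝ ∪ iℝ`, is constant on the closed rectangle. -/
theorem holomorphic_rectangle_boundary_in_axes_constant
    (a₁ b₁ a₂ b₂ : ℝ) (h₁ : a₁ < b₁) (h₂ : a₂ < b₂)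
    (R : Set ℂ)
    (hR : R = {z : ℂ | a₁ < z.re ∧ z.re < b₁ ∧ a₂ < z.im ∧ z.im < b₂})
    (f : ℂ → ℂ)
    (hcont : ContinuousOn f (closure R))
    (hdiff : ∀ z ∈ R, DifferentiableAt ℂ f z)
    (hbd : ∀ z ∈ frontier R, (f z).re = 0 ∨ (f z).im = 0) :
    ∀ z ∈ closure R, ∀ w ∈ closure R, f z = f w := by
  have hR' : R = Ioo a₁ b₁ ×ℂ Ioo a₂ b₂ := by
    ext z; simp [hR, mem_reProdIm, and_assoc]
  have hRopen : IsOpen R := hR' ▸ isOpen_Ioo.reProdIm isOpen_Ioo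
  have hRbdd : IsBounded R :=
    hR' ▸ (Metric.isBounded_Ioo _ _).reProdIm (Metric.isBounded_Ioo _ _)
  have hRconn : IsConnected R := hR' ▸
    ⟨by simp [h₁, h₂], ((convex_Ioo _ _).reProdIm (convex_Ioo _ _)).isPreconnected⟩
  have hsq : DiffContOnCl ℂ (fun z ↦ f z ^ 2) R :=
    ⟨fun z hz ↦ ((hdiff z hz).pow 2).differentiableWithinAt, hcont.pow 2⟩
  have hsq_real : ∀ z ∈ closure R, (f z ^ 2).im = 0 := fun z ↦
    im_eq_zero_of_forall_mem_frontier_im_eq_zero hRbdd hsq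
      (fun w hw ↦ sq_im_eq_zero_of_re_eq_zero_or_im_eq_zero (hbd w hw))
  obtain ⟨c, hc⟩ := AnalyticOnNhd.eq_const_of_im_eq_const
    (hsq.differentiableOn.analyticOnNhd hRopen)
    (fun z hz ↦ hsq_real z (subset_closure hz)) hRopen hRconn
  have hc' : ∀ z ∈ closure R, f z ^ 2 = c := fun z hz ↦
    EqOn.of_subset_closure (g := fun _ ↦ c) hc (hcont.pow 2) continuousOn_const subset_closure
      subset_rfl hz
  exact fun z hz w hw ↦
    hRconn.isPreconnected.closure.constant_of_pow_eq hcont two_ne_zero hc' hz hw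
end

section
/- Let Ω ⊆ ℝ² be open, let h₁, k ∈ ℝ with k ≠ 0, and let χ, η, s : Ω → ℝ be twice continuously differentiable with s_x + 1 ≠ 0 at every point of Ω. Suppose that on Ω: h₁·(k·χ_x + 1) − k·η_x·s_y + k·(s_x + 1)·η_y = 0, (k·χ_x + 1)·s_y + k·h₁·η_x − k·χ_y·(s_x + 1) = 0, and s_xx + s_yy = 0. Then on Ω: ((s_y² + h₁²)/(s_x + 1))·η_xx − 2·s_y·η_xy + (s_x + 1)·η_yy + (((s_x + 1)² − s_y² − h₁²)·s_xx + 2·(s_x + 1)·s_xy·s_y)/(s_x + 1)² · η_x = 0. -/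
/-!
Differentiate the first distorted Cauchy–Riemann equation in `x` and in `y`, and the second
in `x`. By symmetry of second derivatives the unknown `χ` then enters only through `χ_xx`,
`χ_xy`, `χ_x`, `χ_y`, and a combination of these three identities with the two undifferentiated
equations and `s_yy = -s_xx` eliminates all of them, leaving `k (s_x + 1)²` times the equation
for `η`.
-/

noncomputable def pdx (f : ℝ × ℝ → ℝ) (p : ℝ × ℝ) : ℝ := fderiv ℝ f p (1, 0)

noncomputable def pdy (f : ℝ × ℝ → ℝ) (p : ℝ × ℝ) : ℝ := fderiv ℝ f p (0, 1)

section

variable {𝕜 E F : Type*} [NontriviallyNormedField 𝕜] [NormedAddCommGroup E] [NormedSpace 𝕜 E]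
  [NormedAddCommGroup F] [NormedSpace 𝕜 F]

theorem fderiv_eq_zero_of_forall_mem_eq_zero {Ω : Set E} (hΩ : IsOpen Ω) {f : E → F}
    (hf : ∀ q ∈ Ω, f q = 0) {p : E} (hp : p ∈ Ω) : fderiv 𝕜 f p = 0 := by
  rw [(Filter.eventuallyEq_of_mem (hΩ.mem_nhds hp) hf).fderiv_eq]
  simp

end

section

variable {E F : Type*} [NormedAddCommGroup E] [NormedSpace ℝ E] [NormedAddCommGroup F]
  [NormedSpace ℝ F] {f : E → F} {p : E}

theorem ContDiffAt.differentiableAt_fderiv (hf : ContDiffAt ℝ 2 f p) :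
    DifferentiableAt ℝ (fderiv ℝ f) p :=
  (hf.fderiv_right (m := 1) (by norm_num)).differentiableAt one_ne_zero

theorem ContDiffAt.differentiableAt_fderiv_apply (hf : ContDiffAt ℝ 2 f p) (v : E) :
    DifferentiableAt ℝ (fun q => fderiv ℝ f q v) p :=
  hf.differentiableAt_fderiv.clm_apply (differentiableAt_const v)

theorem ContDiffAt.fderiv_fderiv_apply_comm (hf : ContDiffAt ℝ 2 f p) (v w : E) :
    fderiv ℝ (fun q => fderiv ℝ f q v) p w = fderiv ℝ (fun q => fderiv ℝ f q w) p v := by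
  rw [fderiv_clm_apply hf.differentiableAt_fderiv (differentiableAt_const v),
    fderiv_clm_apply hf.differentiableAt_fderiv (differentiableAt_const w)]
  simpa using hf.isSymmSndFDerivAt (by simp) w v

end

section

variable {f χ η s : ℝ × ℝ → ℝ} {p : ℝ × ℝ}

theorem ContDiffAt.differentiableAt_pdx (hf : ContDiffAt ℝ 2 f p) :
    DifferentiableAt ℝ (pdx f) p :=
  hf.differentiableAt_fderiv_apply _

theorem ContDiffAt.differentiableAt_pdy (hf : ContDiffAt ℝ 2 f p) :
    DifferentiableAt ℝ (pdy f) p :=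
  hf.differentiableAt_fderiv_apply _

theorem ContDiffAt.pdx_pdy_comm (hf : ContDiffAt ℝ 2 f p) : pdx (pdy f) p = pdy (pdx f) p :=
  hf.fderiv_fderiv_apply_comm _ _

noncomputable def distortedCR₁ (h₁ k : ℝ) (χ η s : ℝ × ℝ → ℝ) (q : ℝ × ℝ) : ℝ :=
  h₁ * (k * pdx χ q + 1) - k * pdx η q * pdy s q + k * (pdx s q + 1) * pdy η q

noncomputable def distortedCR₂ (h₁ k : ℝ) (χ η s : ℝ × ℝ → ℝ) (q : ℝ × ℝ) : ℝ :=
  (k * pdx χ q + 1) * pdy s q + k * h₁ * pdx η q - k * pdy χ q * (pdx s q + 1)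

theorem fderiv_distortedCR₁_apply (h₁ k : ℝ) (hχ : ContDiffAt ℝ 2 χ p)
    (hη : ContDiffAt ℝ 2 η p) (hs : ContDiffAt ℝ 2 s p) (v : ℝ × ℝ) :
    fderiv ℝ (distortedCR₁ h₁ k χ η s) p v =
      h₁ * k * fderiv ℝ (pdx χ) p v
        - k * (fderiv ℝ (pdx η) p v * pdy s p + pdx η p * fderiv ℝ (pdy s) p v)
        + k * (fderiv ℝ (pdx s) p v * pdy η p + (pdx s p + 1) * fderiv ℝ (pdy η) p v) := by
  have := hχ.differentiableAt_pdx
  have := hη.differentiableAt_pdx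
  have := hη.differentiableAt_pdy
  have := hs.differentiableAt_pdx
  have := hs.differentiableAt_pdy
  unfold distortedCR₁
  simp (disch := fun_prop) only [fderiv_fun_add, fderiv_fun_sub, fderiv_fun_mul, fderiv_fun_const,
    Pi.zero_apply, smul_zero, add_zero, add_apply, sub_apply, smul_apply, smul_eq_mul]
  ring

theorem fderiv_distortedCR₂_apply (h₁ k : ℝ) (hχ : ContDiffAt ℝ 2 χ p)
    (hη : ContDiffAt ℝ 2 η p) (hs : ContDiffAt ℝ 2 s p) (v : ℝ × ℝ) :
    fderiv ℝ (distortedCR₂ h₁ k χ η s) p v =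
      k * fderiv ℝ (pdx χ) p v * pdy s p + (k * pdx χ p + 1) * fderiv ℝ (pdy s) p v
        + k * h₁ * fderiv ℝ (pdx η) p v
        - k * (fderiv ℝ (pdy χ) p v * (pdx s p + 1) + pdy χ p * fderiv ℝ (pdx s) p v) := by
  have := hχ.differentiableAt_pdx
  have := hχ.differentiableAt_pdy
  have := hη.differentiableAt_pdx
  have := hs.differentiableAt_pdx
  have := hs.differentiableAt_pdy
  unfold distortedCR₂
  simp (disch := fun_prop) only [fderiv_fun_add, fderiv_fun_sub, fderiv_fun_mul, fderiv_fun_const,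
    Pi.zero_apply, smul_zero, add_zero, add_apply, sub_apply, smul_apply, smul_eq_mul]
  ring

end

/-- In the upper layer, the distorted Cauchy–Riemann equations together with
harmonicity of the distortion `s` imply that the interface height function `η`
satisfies a scalar second-order elliptic equation. -/
theorem upper_layer_eta_elliptic
    (Ω : Set (ℝ × ℝ)) (hΩ : IsOpen Ω) (h₁ k : ℝ) (hk : k ≠ 0)
    (χ η s : ℝ × ℝ → ℝ)
    (hχ : ContDiffOn ℝ 2 χ Ω) (hη : ContDiffOn ℝ 2 η Ω) (hs : ContDiffOn ℝ 2 s Ω)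
    (hsx : ∀ p ∈ Ω, pdx s p + 1 ≠ 0)
    (e1 : ∀ p ∈ Ω,
      h₁ * (k * pdx χ p + 1) - k * pdx η p * pdy s p + k * (pdx s p + 1) * pdy η p = 0)
    (e2 : ∀ p ∈ Ω,
      (k * pdx χ p + 1) * pdy s p + k * h₁ * pdx η p - k * pdy χ p * (pdx s p + 1) = 0)
    (e3 : ∀ p ∈ Ω, pdx (pdx s) p + pdy (pdy s) p = 0) :
    ∀ p ∈ Ω,
      ((pdy s p ^ 2 + h₁ ^ 2) / (pdx s p + 1)) * pdx (pdx η) p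
        - 2 * pdy s p * pdy (pdx η) p
        + (pdx s p + 1) * pdy (pdy η) p
        + (((pdx s p + 1) ^ 2 - pdy s p ^ 2 - h₁ ^ 2) * pdx (pdx s) p
            + 2 * (pdx s p + 1) * pdy (pdx s) p * pdy s p) / (pdx s p + 1) ^ 2
          * pdx η p = 0 := by
  intro p hp
  have hχp := hχ.contDiffAt (hΩ.mem_nhds hp)
  have hηp := hη.contDiffAt (hΩ.mem_nhds hp)
  have hsp := hs.contDiffAt (hΩ.mem_nhds hp)
  have hCR₁ : fderiv ℝ (distortedCR₁ h₁ k χ η s) p = 0 :=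
    fderiv_eq_zero_of_forall_mem_eq_zero hΩ e1 hp
  have hCR₂ : fderiv ℝ (distortedCR₂ h₁ k χ η s) p = 0 :=
    fderiv_eq_zero_of_forall_mem_eq_zero hΩ e2 hp
  have hx₁ := fderiv_distortedCR₁_apply h₁ k hχp hηp hsp (1, 0)
  have hy₁ := fderiv_distortedCR₁_apply h₁ k hχp hηp hsp (0, 1)
  have hx₂ := fderiv_distortedCR₂_apply h₁ k hχp hηp hsp (1, 0)
  simp only [hCR₁, hCR₂, zero_apply, ← pdx.eq_1, ← pdy.eq_1,
    hχp.pdx_pdy_comm, hηp.pdx_pdy_comm, hsp.pdx_pdy_comm] at hx₁ hy₁ hx₂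
  have hA := hsx p hp
  field_simp
  apply mul_left_cancel₀ hk
  linear_combination (pdx s p + 1) * pdy s p * hx₁ - (pdx s p + 1) ^ 2 * hy₁
    - h₁ * (pdx s p + 1) * hx₂ + (pdx s p + 1) ^ 2 * k * pdx η p * e3 p hp
    + (pdx (pdx s) p * pdy s p - (pdx s p + 1) * pdy (pdx s) p) * e1 p hp
    - pdx (pdx s) p * h₁ * e2 p hp
end

section
/- Let h₀, k, ω₀ ∈ ℝ with h₀ ≠ 0 and k ≠ 0, and let u₀x, v₀x, v₀y, η₀x, η₀y, χ₀x, u₁x, u₁y, v₁x, v₁y, χ₁x, χ₁y, η₁x, η₁y be real numbers satisfying: (i) k·η₁y·u₁x − k·η₁x·u₁y − k·χ₁y·v₁x + (k·χ₁x + 1)·v₁y = 0; (ii) u₀x = u₁x, v₀x = v₁x, χ₀x = χ₁x and η₀x = η₁x; (iii) h₀·u₀x + v₀y − h₀·ω₀·η₀x = 0; (iv) h₀·(k·χ₀x + 1) − k·η₀y = 0. Then h₀·ω₀·η₀x·η₁y − h₀·χ₁y·v₀x − h₀·η₀x·u₁y + η₀y·v₁y − η₁y·v₀y = 0. -/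
theorem interface_identity_one_general
    (h₀ k ω₀ : ℝ) (hk : k ≠ 0)
    (u₀x v₀x v₀y η₀x η₀y χ₀x u₁x u₁y v₁x v₁y χ₁x χ₁y η₁x η₁y : ℝ)
    (e1 : k * η₁y * u₁x - k * η₁x * u₁y - k * χ₁y * v₁x + (k * χ₁x + 1) * v₁y = 0)
    (e2u : u₀x = u₁x) (e2v : v₀x = v₁x) (e2χ : χ₀x = χ₁x) (e2η : η₀x = η₁x)
    (e3 : h₀ * u₀x + v₀y - h₀ * ω₀ * η₀x = 0)
    (e4 : h₀ * (k * χ₀x + 1) - k * η₀y = 0) :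
    h₀ * ω₀ * η₀x * η₁y - h₀ * χ₁y * v₀x - h₀ * η₀x * u₁y + η₀y * v₁y - η₁y * v₀y = 0 := by
  subst e2u e2v e2χ e2η
  refine (mul_eq_zero.mp ?_).resolve_left hk
  linear_combination h₀ * e1 - k * η₁y * e3 - v₁y * e4

/-- First interface identity used in the maximum-principle (closed condition)
argument for the nodal property of the vertical velocity. -/
theorem interface_identity_one
    (h₀ k ω₀ : ℝ) (hh₀ : h₀ ≠ 0) (hk : k ≠ 0)
    (u₀x v₀x v₀y η₀x η₀y χ₀x u₁x u₁y v₁x v₁y χ₁x χ₁y η₁x η₁y : ℝ)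
    (e1 : k * η₁y * u₁x - k * η₁x * u₁y - k * χ₁y * v₁x + (k * χ₁x + 1) * v₁y = 0)
    (e2u : u₀x = u₁x) (e2v : v₀x = v₁x) (e2χ : χ₀x = χ₁x) (e2η : η₀x = η₁x)
    (e3 : h₀ * u₀x + v₀y - h₀ * ω₀ * η₀x = 0)
    (e4 : h₀ * (k * χ₀x + 1) - k * η₀y = 0) :
    h₀ * ω₀ * η₀x * η₁y - h₀ * χ₁y * v₀x - h₀ * η₀x * u₁y + η₀y * v₁y - η₁y * v₀y = 0 :=
  interface_identity_one_general h₀ k ω₀ hk u₀x v₀x v₀y η₀x η₀y χ₀x u₁x u₁y v₁x v₁y χ₁x χ₁y η₁x η₁y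
    e1 e2u e2v e2χ e2η e3 e4
end
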